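/- Let κ > 0 and let c ∈ ℝ^q be a point whose metric projection π_κ(c) onto κ·P^{q−1} lies in relint(κ·τ_J) for an ordered partition J of {1,…,q}. If c belongs to the closure of the preimage π_κ^{−1}(relint(κ·τ_{J₁})) for an ordered partition J₁ of {1,…,q}, then τ_J ⊆ τ_{J₁}. -/

import Mathlib

/-!
The face `τ_{J₁}` is exposed by the linear functional `x ↦ ⟪w, x⟫`, where `w j` is the index of
the block of `J₁` containing `j`: by the rearrangement inequality, `⟪w, P_ρ⟫` is maximal exactly
when `ρ` is compatible with `J₁`. The metric projection onto a compact convex set is 1-Lipschitz,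
so `π_κ(c)` lies in the closed set `κ·τ_{J₁}` and hence maximizes this functional on `κ·P^{q−1}`.
A linear functional attaining its maximum over a convex set at a relative-interior point is
constant on that set; applied to `κ·τ_J`, this puts every vertex of `τ_J` on the maximal face,
that is, in `τ_{J₁}`.
-/

open Set Pointwise

noncomputable section

/-- The vertex `P_ρ` of the permutohedron: the point whose `ρ(k)`-th coordinate is
`k − (q+1)/2` (with `k` running through `1,…,q`, here 0-indexed as `Fin q`). -/
def vertexPoint (q : ℕ) (ρ : Equiv.Perm (Fin q)) : EuclideanSpace ℝ (Fin q) :=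
  WithLp.toLp 2 (fun i => ((ρ.symm i : ℕ) + 1 : ℝ) - ((q : ℝ) + 1) / 2)

/-- The permutohedron `P^{q−1} ⊂ ℝ^q`: the convex hull of the points `P_ρ`. -/
def permutohedron (q : ℕ) : Set (EuclideanSpace ℝ (Fin q)) :=
  convexHull ℝ (Set.range (vertexPoint q))

/-- An ordered partition `J = (J_1,…,J_s)` of `{1,…,q}` into `s` nonempty subsets. -/
structure OrderedPartition (q s : ℕ) where
  blocks : Fin s → Finset (Fin q)
  nonempty : ∀ k, (blocks k).Nonempty
  disjoint : ∀ k l, k ≠ l → Disjoint (blocks k) (blocks l)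
  covers : ∀ j : Fin q, ∃ k, j ∈ blocks k

/-- `cumCard J n = r_n`, the total cardinality of the first `n` blocks. -/
def cumCard {q s : ℕ} (J : OrderedPartition q s) (n : ℕ) : ℕ :=
  ∑ i ∈ Finset.univ.filter (fun i : Fin s => (i : ℕ) < n), (J.blocks i).card

/-- A permutation `π` is compatible with the ordered partition `J` if it maps the
`k`-th consecutive block `{r_{k−1}+1,…,r_k}` (0-indexed: `[r_{k−1}, r_k)`) onto `J_k`;
these are exactly the permutations `σρ` with `σ` in the Young subgroup. -/
def compatiblePerm {q s : ℕ} (J : OrderedPartition q s) (π : Equiv.Perm (Fin q)) : Prop :=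
  ∀ (k : Fin s) (i : Fin q),
    π i ∈ J.blocks k ↔ cumCard J (k : ℕ) ≤ (i : ℕ) ∧ (i : ℕ) < cumCard J ((k : ℕ) + 1)

/-- The face `τ_J` of the permutohedron corresponding to the ordered partition `J`. -/
def face (q s : ℕ) (J : OrderedPartition q s) : Set (EuclideanSpace ℝ (Fin q)) :=
  convexHull ℝ {x | ∃ π : Equiv.Perm (Fin q), compatiblePerm J π ∧ x = vertexPoint q π}

/-- The metric projection onto a set `K`: a point of `K` at minimal distance
(unique when `K` is compact, convex and nonempty in Euclidean space). -/
def metricProj {E : Type*} [MetricSpace E] [Nonempty E] (K : Set E) (c : E) : E :=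
  Classical.epsilon fun y => y ∈ K ∧ ∀ z ∈ K, dist c y ≤ dist c z

section ConvexGeometry

open Topology

variable {E : Type*} [NormedAddCommGroup E] [NormedSpace ℝ E]

theorem exists_mem_openSegment_of_mem_intrinsicInterior {S : Set E} {x y : E}
    (hx : x ∈ intrinsicInterior ℝ S) (hy : y ∈ S) : ∃ z ∈ S, x ∈ openSegment ℝ y z := by
  obtain ⟨x', hx', rfl⟩ := hx
  let line : ℝ → affineSpan ℝ S := fun t =>
    ⟨AffineMap.lineMap (x' : E) y (-t),
      AffineMap.lineMap_mem _ x'.2 (subset_affineSpan ℝ S hy)⟩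
  have hline : Continuous line :=
    (AffineMap.lineMap_continuous.comp continuous_neg).subtype_mk _
  have h0 : line 0 = x' := Subtype.ext (by simp [line])
  have hev : ∀ᶠ t in 𝓝[>] (0 : ℝ), line t ∈ ((↑) ⁻¹' S : Set (affineSpan ℝ S)) :=
    eventually_nhdsWithin_of_eventually_nhds
      (hline.continuousAt.eventually_mem (by rw [h0]; exact mem_interior_iff_mem_nhds.1 hx'))
  obtain ⟨t, ht, ht0⟩ := (hev.and self_mem_nhdsWithin).exists
  refine ⟨_, ht, t / (1 + t), 1 / (1 + t), by positivity, by positivity, by field_simp; ring, ?_⟩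
  simp only [line, AffineMap.lineMap_apply_module]
  match_scalars <;> field_simp <;> ring

theorem IsMaxOn.apply_eq_of_mem_intrinsicInterior {C : Set E} {l : E →ₗ[ℝ] ℝ} {x y : E}
    (hmax : IsMaxOn l C x) (hx : x ∈ intrinsicInterior ℝ C) (hy : y ∈ C) : l y = l x := by
  obtain ⟨z, hz, a, b, ha, hb, hab, rfl⟩ := exists_mem_openSegment_of_mem_intrinsicInterior hx hy
  have hly := isMaxOn_iff.1 hmax y hy
  have hlz := isMaxOn_iff.1 hmax z hz
  simp only [map_add, map_smul, smul_eq_mul] at hly hlz ⊢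
  obtain rfl : b = 1 - a := by linarith
  have hzy : l z ≤ l y := by nlinarith
  have hyz : l y ≤ l z := by nlinarith
  nlinarith

theorem IsMaxOn.smul_set {S : Set E} {l : E →ₗ[ℝ] ℝ} {x : E} (hmax : IsMaxOn l S x)
    {κ : ℝ} (hκ : 0 ≤ κ) : IsMaxOn l (κ • S) (κ • x) := by
  rw [isMaxOn_iff]
  rintro _ ⟨y, hy, rfl⟩
  simpa only [map_smul, smul_eq_mul] using mul_le_mul_of_nonneg_left (hmax hy) hκ

end ConvexGeometry

section MetricProjection

open RealInnerProductSpace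

theorem metricProj_spec {E : Type*} [MetricSpace E] [Nonempty E] {K : Set E}
    (hK : IsCompact K) (hne : K.Nonempty) (c : E) :
    metricProj K c ∈ K ∧ ∀ z ∈ K, dist c (metricProj K c) ≤ dist c z := by
  obtain ⟨y, hyK, hmin⟩ :=
    hK.exists_isMinOn hne (continuous_const.dist continuous_id).continuousOn
  exact Classical.epsilon_spec (p := fun y => y ∈ K ∧ ∀ z ∈ K, dist c y ≤ dist c z)
    ⟨y, hyK, fun z hz => hmin hz⟩

variable {E : Type*} [NormedAddCommGroup E] [InnerProductSpace ℝ E] {K : Set E}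

theorem inner_sub_metricProj_nonpos (hK : IsCompact K) (hconv : Convex ℝ K) (hne : K.Nonempty)
    (c : E) {w : E} (hw : w ∈ K) : ⟪c - metricProj K c, w - metricProj K c⟫ ≤ 0 := by
  obtain ⟨hp, hmin⟩ := metricProj_spec hK hne c
  have : Nonempty K := hne.to_subtype
  refine (norm_eq_iInf_iff_real_inner_le_zero hconv hp).1 (le_antisymm
    (le_ciInf fun z => by simpa [dist_eq_norm] using hmin z z.2)
    (ciInf_le ⟨0, Set.forall_mem_range.2 fun _ => norm_nonneg _⟩ (⟨_, hp⟩ : K))) w hw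

theorem lipschitzWith_one_metricProj (hK : IsCompact K) (hconv : Convex ℝ K)
    (hne : K.Nonempty) : LipschitzWith 1 (metricProj K) := by
  refine LipschitzWith.mk_one fun x y => ?_
  set p := metricProj K x
  set p' := metricProj K y
  have hx := inner_sub_metricProj_nonpos hK hconv hne x (metricProj_spec hK hne y).1
  have hy := inner_sub_metricProj_nonpos hK hconv hne y (metricProj_spec hK hne x).1
  have hsq : ‖p - p'‖ ^ 2 ≤ ‖x - y‖ * ‖p - p'‖ := by
    have hexpand : ⟪x - y, p - p'⟫ = ‖p - p'‖ ^ 2 - ⟪x - p, p' - p⟫ - ⟪y - p', p - p'⟫ := by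
      rw [← real_inner_self_eq_norm_sq]
      simp only [inner_sub_left, inner_sub_right, real_inner_comm]
      ring
    linarith [real_inner_le_norm (x - y) (p - p')]
  rw [dist_eq_norm, dist_eq_norm]
  nlinarith [norm_nonneg (p - p'), norm_nonneg (x - y)]

end MetricProjection

namespace OrderedPartition

variable {q s : ℕ} (J : OrderedPartition q s)

def blockIdx (j : Fin q) : Fin s := (J.covers j).choose

theorem mem_blocks_iff {j : Fin q} {k : Fin s} : j ∈ J.blocks k ↔ J.blockIdx j = k := by
  have hj : j ∈ J.blocks (J.blockIdx j) := (J.covers j).choose_spec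
  refine ⟨fun h => ?_, fun h => h ▸ hj⟩
  by_contra hne
  exact Finset.disjoint_left.1 (J.disjoint _ _ hne) hj h

theorem cumCard_mono : Monotone (cumCard J) := fun _ _ hnm =>
  Finset.sum_le_sum_of_subset fun _ hi => by
    simp only [Finset.mem_filter, Finset.mem_univ, true_and] at hi ⊢
    omega

variable {J}

theorem monotone_blockIdx_comp {π : Equiv.Perm (Fin q)} (hπ : compatiblePerm J π) :
    Monotone (J.blockIdx ∘ π) := by
  intro i i' hii'
  have hi := (hπ _ i).1 (J.mem_blocks_iff.2 rfl)
  have hi' := (hπ _ i').1 (J.mem_blocks_iff.2 rfl)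
  by_contra hlt
  have hlt' : (J.blockIdx (π i') : ℕ) + 1 ≤ J.blockIdx (π i) := not_le.1 hlt
  have := J.cumCard_mono hlt'
  have : (i : ℕ) ≤ i' := hii'
  omega

theorem compatiblePerm_iff_monotone {π ρ : Equiv.Perm (Fin q)} (hπ : compatiblePerm J π) :
    compatiblePerm J ρ ↔ Monotone (J.blockIdx ∘ ρ) := by
  refine ⟨monotone_blockIdx_comp, fun hρ k i => ?_⟩
  have heq := congrFun (Tuple.unique_monotone hρ (monotone_blockIdx_comp hπ)) i
  simp only [Function.comp_apply] at heq
  rw [J.mem_blocks_iff, heq, ← J.mem_blocks_iff]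
  exact hπ k i

variable (J)

def weight : EuclideanSpace ℝ (Fin q) := WithLp.toLp 2 fun j => ((J.blockIdx j : ℕ) : ℝ)

open RealInnerProductSpace

theorem inner_weight_vertexPoint (ρ : Equiv.Perm (Fin q)) :
    ⟪J.weight, vertexPoint q ρ⟫ =
      ∑ i : Fin q, (((i : ℕ) + 1 : ℝ) - ((q : ℝ) + 1) / 2) • J.weight (ρ i) := by
  rw [PiLp.inner_apply, ← Equiv.sum_comp ρ]
  simp [weight, vertexPoint]

variable {J}

theorem monotone_weight_comp_iff {ρ : Equiv.Perm (Fin q)} :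
    Monotone (fun i => J.weight (ρ i)) ↔ Monotone (J.blockIdx ∘ ρ) := by
  simp only [Monotone, weight, PiLp.toLp_apply, Function.comp_apply, Nat.cast_le, Fin.val_fin_le]

theorem strictMono_vertexPoint_coeff :
    StrictMono fun i : Fin q => ((i : ℕ) + 1 : ℝ) - ((q : ℝ) + 1) / 2 := fun i j hij => by
  simpa using hij

theorem monovary_vertexPoint_coeff_weight {π : Equiv.Perm (Fin q)} (hπ : compatiblePerm J π) :
    Monovary (fun i : Fin q => ((i : ℕ) + 1 : ℝ) - ((q : ℝ) + 1) / 2) (fun i => J.weight (π i)) :=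
  strictMono_vertexPoint_coeff.monotone.monovary
    (monotone_weight_comp_iff.2 (monotone_blockIdx_comp hπ))

theorem inner_weight_vertexPoint_le {π : Equiv.Perm (Fin q)} (hπ : compatiblePerm J π)
    (ρ : Equiv.Perm (Fin q)) : ⟪J.weight, vertexPoint q ρ⟫ ≤ ⟪J.weight, vertexPoint q π⟫ := by
  simpa [inner_weight_vertexPoint] using
    (monovary_vertexPoint_coeff_weight hπ).sum_smul_comp_perm_le_sum_smul (σ := ρ.trans π.symm)

theorem inner_weight_vertexPoint_eq_iff {π ρ : Equiv.Perm (Fin q)} (hπ : compatiblePerm J π) :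
    ⟪J.weight, vertexPoint q ρ⟫ = ⟪J.weight, vertexPoint q π⟫ ↔ compatiblePerm J ρ := by
  have h := (monovary_vertexPoint_coeff_weight hπ).sum_smul_comp_perm_eq_sum_smul_iff
    (σ := ρ.trans π.symm)
  simp only [Function.comp_def, Equiv.trans_apply, Equiv.apply_symm_apply] at h
  rw [inner_weight_vertexPoint, inner_weight_vertexPoint, h, compatiblePerm_iff_monotone hπ,
    ← monotone_weight_comp_iff, monovary_comm]
  exact ⟨strictMono_vertexPoint_coeff.trans_monovary,
    fun hmono => hmono.monovary strictMono_vertexPoint_coeff.monotone⟩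

end OrderedPartition

section Permutohedron

open RealInnerProductSpace OrderedPartition

variable {q s : ℕ}

theorem isCompact_permutohedron (q : ℕ) : IsCompact (permutohedron q) :=
  (finite_range _).isCompact_convexHull (𝕜 := ℝ)

theorem convex_permutohedron (q : ℕ) : Convex ℝ (permutohedron q) :=
  convex_convexHull ℝ _

theorem permutohedron_nonempty (q : ℕ) : (permutohedron q).Nonempty :=
  ⟨_, subset_convexHull ℝ _ (mem_range_self 1)⟩

theorem vertexPoint_mem_face {J : OrderedPartition q s} {π : Equiv.Perm (Fin q)}
    (hπ : compatiblePerm J π) : vertexPoint q π ∈ face q s J :=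
  subset_convexHull ℝ _ ⟨π, hπ, rfl⟩

theorem face_subset_permutohedron (J : OrderedPartition q s) : face q s J ⊆ permutohedron q :=
  convexHull_mono <| by rintro _ ⟨π, -, rfl⟩; exact mem_range_self π

theorem isCompact_face (J : OrderedPartition q s) : IsCompact (face q s J) :=
  ((finite_range (vertexPoint q)).subset <| by rintro _ ⟨π, -, rfl⟩; exact mem_range_self π)
    |>.isCompact_convexHull (𝕜 := ℝ)

variable {J : OrderedPartition q s} {x : EuclideanSpace ℝ (Fin q)}

theorem exists_compatiblePerm_of_mem_face (hx : x ∈ face q s J) : ∃ π, compatiblePerm J π := by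
  obtain ⟨_, π, hπ, -⟩ := convexHull_nonempty_iff.1 ⟨x, hx⟩
  exact ⟨π, hπ⟩

theorem inner_weight_eq_of_mem_face {π : Equiv.Perm (Fin q)} (hπ : compatiblePerm J π)
    (hx : x ∈ face q s J) : ⟪J.weight, x⟫ = ⟪J.weight, vertexPoint q π⟫ :=
  convexHull_min (t := {y | ⟪J.weight, y⟫ = ⟪J.weight, vertexPoint q π⟫})
    (by rintro _ ⟨ρ, hρ, rfl⟩; exact (inner_weight_vertexPoint_eq_iff hπ).2 hρ)
    (convex_hyperplane (innerₛₗ ℝ J.weight).isLinear _) hx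

theorem isMaxOn_inner_weight_of_mem_face (hx : x ∈ face q s J) :
    IsMaxOn (innerₛₗ ℝ J.weight) (permutohedron q) x := by
  obtain ⟨π, hπ⟩ := exists_compatiblePerm_of_mem_face hx
  refine isMaxOn_iff.2 fun y hy => ?_
  rw [innerₛₗ_apply_apply, innerₛₗ_apply_apply, inner_weight_eq_of_mem_face hπ hx]
  exact convexHull_min (t := {y | ⟪J.weight, y⟫ ≤ ⟪J.weight, vertexPoint q π⟫})
    (by rintro _ ⟨ρ, rfl⟩; exact inner_weight_vertexPoint_le hπ ρ)
    (convex_halfSpace_le (innerₛₗ ℝ J.weight).isLinear _) hy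

theorem compatiblePerm_of_inner_weight_eq (hx : x ∈ face q s J) {ρ : Equiv.Perm (Fin q)}
    (h : ⟪J.weight, vertexPoint q ρ⟫ = ⟪J.weight, x⟫) : compatiblePerm J ρ := by
  obtain ⟨π, hπ⟩ := exists_compatiblePerm_of_mem_face hx
  rwa [inner_weight_eq_of_mem_face hπ hx, inner_weight_vertexPoint_eq_iff hπ] at h

end Permutohedron

theorem face_subset_of_mem_closure_preimage_general (q s u : ℕ)
    (κ : ℝ) (hκ : 0 < κ)
    (J : OrderedPartition q s) (J₁ : OrderedPartition q u)
    (c : EuclideanSpace ℝ (Fin q))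
    (h1 : metricProj (κ • permutohedron q) c ∈ intrinsicInterior ℝ (κ • face q s J))
    (h2 : c ∈ closure
      (metricProj (κ • permutohedron q) ⁻¹' intrinsicInterior ℝ (κ • face q u J₁))) :
    face q s J ⊆ face q u J₁ := by
  have hcont : Continuous (metricProj (κ • permutohedron q)) :=
    (lipschitzWith_one_metricProj ((isCompact_permutohedron q).smul κ)
      ((convex_permutohedron q).smul κ) (permutohedron_nonempty q).smul_set).continuous
  obtain ⟨p, hp, hpc⟩ := mem_smul_set.1 <|
    closure_minimal intrinsicInterior_subset ((isCompact_face J₁).smul κ).isClosed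
      (map_mem_closure hcont h2 fun _ h => h)
  rw [← hpc] at h1
  have hmax : IsMaxOn (innerₛₗ ℝ J₁.weight) (κ • face q s J) (κ • p) :=
    ((isMaxOn_inner_weight_of_mem_face hp).smul_set hκ.le).on_subset
      (smul_set_mono (face_subset_permutohedron J))
  refine convexHull_min ?_ (convex_convexHull ℝ _)
  rintro _ ⟨π, hπ, rfl⟩
  have heq := hmax.apply_eq_of_mem_intrinsicInterior h1
    (smul_mem_smul_set (vertexPoint_mem_face hπ))
  simp only [map_smul, innerₛₗ_apply_apply, smul_eq_mul] at heq
  exact vertexPoint_mem_face (compatiblePerm_of_inner_weight_eq hp (mul_left_cancel₀ hκ.ne' heq))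

/-- if `π_κ(c)` lies in the relative interior of `κ·τ_J` and `c` lies in
the closure of `π_κ^{−1}(relint(κ·τ_{J₁}))`, then `τ_J ⊆ τ_{J₁}`. -/
theorem face_subset_of_mem_closure_preimage (q s u : ℕ) (hq : 1 ≤ q)
    (κ : ℝ) (hκ : 0 < κ)
    (J : OrderedPartition q s) (J₁ : OrderedPartition q u)
    (c : EuclideanSpace ℝ (Fin q))
    (h1 : metricProj (κ • permutohedron q) c ∈ intrinsicInterior ℝ (κ • face q s J))
    (h2 : c ∈ closure
      (metricProj (κ • permutohedron q) ⁻¹' intrinsicInterior ℝ (κ • face q u J₁))) :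
    face q s J ⊆ face q u J₁ :=
  face_subset_of_mem_closure_preimage_general q s u κ hκ J J₁ c h1 h2

end
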